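/- arXiv:2104.04590 — 4 statements merged into one kernel-verified Lean document; each statement's English description precedes it below -/
import Mathlib

section
/- Every polynomial p(A) = Σ_{j=0}^{2m+1} η_j A^j of odd degree at most 2m+1 that is nonnegative for all A ∈ [0,∞) can be written as p(A) = A·f(A)² + q(A)² where f and q are real polynomials of degree at most m. -/
/-!
Induct on the degree, splitting off factors of the form `X f² + q²`; these are closed under
products by `(X a² + b²)(X c² + d²) = X (a d + b c)² + (b d - X a c)²`. A complex root `z` of `p`
yields such a factor: `X - r` if `z = r ≤ 0` is real, `(X - r)²` if `z = r > 0` (an interior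
minimum of `p` on `[0, ∞)`, hence a double root), and the real quadratic with roots `z, z̄`
otherwise. In each case the factor is positive on `(0, ∞)` off one point, so by continuity the
quotient is again nonnegative on `[0, ∞)`. The degree bound holds because `deg (X f²)` is odd
and `deg (q²)` even, so the leading terms cannot cancel.
-/

open Polynomial Set

namespace Polynomial

def IsXMulSqAddSq {R : Type*} [CommRing R] (p : R[X]) : Prop :=
  ∃ f q : R[X], p = X * f ^ 2 + q ^ 2

section CommRing

variable {R : Type*} [CommRing R]

theorem IsXMulSqAddSq.mul {p p' : R[X]} (hp : IsXMulSqAddSq p) (hp' : IsXMulSqAddSq p') :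
    IsXMulSqAddSq (p * p') := by
  obtain ⟨a, b, rfl⟩ := hp
  obtain ⟨c, d, rfl⟩ := hp'
  exact ⟨a * d + b * c, b * d - X * a * c, by ring⟩

theorem isXMulSqAddSq_sq (q : R[X]) : IsXMulSqAddSq (q ^ 2) :=
  ⟨0, q, by ring⟩

end CommRing

theorem isXMulSqAddSq_C {c : ℝ} (hc : 0 ≤ c) : IsXMulSqAddSq (C c) :=
  ⟨0, C √c, by rw [← C_pow, Real.sq_sqrt hc]; ring⟩

theorem isXMulSqAddSq_X_sub_C {r : ℝ} (hr : r ≤ 0) : IsXMulSqAddSq (X - C r) :=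
  ⟨1, C √(-r), by rw [← C_pow, Real.sq_sqrt (neg_nonneg.mpr hr), C_neg]; ring⟩

/-- With `t = ‖z‖` this quadratic is `X * (2t - 2 re z) + (X - t)²`. -/
theorem isXMulSqAddSq_quadratic (z : ℂ) :
    IsXMulSqAddSq (X ^ 2 - C (2 * z.re) * X + C (‖z‖ ^ 2)) := by
  have ha : 0 ≤ 2 * ‖z‖ - 2 * z.re := by linarith [Complex.re_le_norm z]
  refine ⟨C √(2 * ‖z‖ - 2 * z.re), X - C ‖z‖, ?_⟩
  rw [← C_pow, Real.sq_sqrt ha]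
  simp only [C_sub, C_mul, C_pow, map_ofNat]
  ring

theorem eval_nonneg_of_forall_pos_ne {p : ℝ[X]} {r : ℝ}
    (h : ∀ x, 0 < x → x ≠ r → 0 ≤ p.eval x) {x : ℝ} (hx : 0 ≤ x) : 0 ≤ p.eval x := by
  have hclosed : IsClosed {x | 0 ≤ p.eval x} := isClosed_le continuous_const p.continuous
  have hdense : Ici (0 : ℝ) ⊆ closure (Ioi 0 ∩ {r}ᶜ) := by
    rw [← closure_Ioi]
    exact closure_minimal ((dense_compl_singleton r).open_subset_closure_inter isOpen_Ioi)
      isClosed_closure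
  exact hclosed.closure_subset_iff.mpr (fun y hy => h y hy.1 hy.2) (hdense hx)

theorem eval_nonneg_of_mul {g h : ℝ[X]} {r : ℝ} (hp : ∀ x, 0 ≤ x → 0 ≤ (g * h).eval x)
    (hg : ∀ x, 0 < x → x ≠ r → 0 < g.eval x) {x : ℝ} (hx : 0 ≤ x) : 0 ≤ h.eval x :=
  eval_nonneg_of_forall_pos_ne (fun y hy hyr =>
    nonneg_of_mul_nonneg_right (by simpa using hp y hy.le) (hg y hy hyr)) hx

theorem sq_X_sub_C_dvd_of_isRoot {p : ℝ[X]} {r : ℝ} (hp : ∀ x, 0 ≤ x → 0 ≤ p.eval x)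
    (hr : 0 < r) (hroot : p.IsRoot r) : (X - C r) ^ 2 ∣ p := by
  rcases eq_or_ne p 0 with rfl | hp0
  · exact dvd_zero _
  have hmin : IsLocalMin (fun x => p.eval x) r :=
    IsMinOn.isLocalMin (s := Ici 0) (fun x hx => by simpa [hroot.eq_zero] using hp x hx)
      (Ici_mem_nhds hr)
  have hderiv : p.derivative.IsRoot r := by
    rw [IsRoot, ← Polynomial.deriv]
    exact hmin.deriv_eq_zero
  rw [← le_rootMultiplicity_iff hp0]
  exact (one_lt_rootMultiplicity_iff_isRoot hp0).mpr ⟨hroot, hderiv⟩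

theorem exists_isXMulSqAddSq_dvd {p : ℝ[X]} (hp : ∀ x, 0 ≤ x → 0 ≤ p.eval x)
    (hdeg : 0 < p.natDegree) :
    ∃ g h : ℝ[X], p = g * h ∧ 0 < g.natDegree ∧ IsXMulSqAddSq g ∧
      ∀ x, 0 ≤ x → 0 ≤ h.eval x := by
  obtain ⟨z, hz⟩ := IsAlgClosed.exists_aeval_eq_zero ℂ p (natDegree_pos_iff_degree_pos.mp hdeg).ne'
  by_cases him : z.im = 0
  · have hroot : p.IsRoot z.re := by
      rw [← Complex.re_add_im z, him, Complex.ofReal_zero, zero_mul, add_zero,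
        ← Complex.coe_algebraMap, aeval_algebraMap_apply_eq_algebraMap_eval] at hz
      exact (map_eq_zero_iff _ (algebraMap ℝ ℂ).injective).mp hz
    rcases le_or_gt z.re 0 with hr | hr
    · obtain ⟨h, rfl⟩ := dvd_iff_isRoot.mpr hroot
      refine ⟨X - C z.re, h, rfl, by simp, isXMulSqAddSq_X_sub_C hr,
        fun x hx => eval_nonneg_of_mul hp (r := z.re) (fun y hy _ => ?_) hx⟩
      simp only [eval_sub, eval_X, eval_C]
      linarith
    · obtain ⟨h, rfl⟩ := sq_X_sub_C_dvd_of_isRoot hp hr hroot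
      refine ⟨(X - C z.re) ^ 2, h, rfl, by simp, isXMulSqAddSq_sq _,
        fun x hx => eval_nonneg_of_mul hp (r := z.re) (fun y _ hyr => ?_) hx⟩
      simpa using sq_pos_of_ne_zero (sub_ne_zero.mpr hyr)
  · obtain ⟨h, rfl⟩ := p.quadratic_dvd_of_aeval_eq_zero_im_ne_zero hz him
    have hdeg2 : (X ^ 2 - C (2 * z.re) * X + C (‖z‖ ^ 2) : ℝ[X]).natDegree = 2 := by
      compute_degree!
    refine ⟨_, h, rfl, by omega, isXMulSqAddSq_quadratic z,
      fun x hx => eval_nonneg_of_mul hp (r := 0) (fun y _ _ => ?_) hx⟩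
    have hnorm : ‖z‖ ^ 2 = z.re ^ 2 + z.im ^ 2 := by
      rw [← Complex.normSq_eq_norm_sq, Complex.normSq_apply]; ring
    simp only [eval_add, eval_sub, eval_mul, eval_pow, eval_X, eval_C, hnorm]
    nlinarith [sq_nonneg (y - z.re), pow_pos (abs_pos.mpr him) 2, sq_abs z.im]

theorem isXMulSqAddSq_of_forall_nonneg {p : ℝ[X]} (hp : ∀ x, 0 ≤ x → 0 ≤ p.eval x) :
    IsXMulSqAddSq p := by
  induction hn : p.natDegree using Nat.strong_induction_on generalizing p with
  | _ n ih =>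
  rcases Nat.eq_zero_or_pos n with rfl | hn0
  · rw [eq_C_of_natDegree_eq_zero hn]
    exact isXMulSqAddSq_C (by simpa [← coeff_zero_eq_eval_zero] using hp 0 le_rfl)
  obtain ⟨g, h, rfl, hg, hgS, hh⟩ := exists_isXMulSqAddSq_dvd hp (hn ▸ hn0)
  have hne : g * h ≠ 0 := by rintro hz; simp [hz] at hn; omega
  refine hgS.mul (ih h.natDegree ?_ hh rfl)
  rw [← hn, natDegree_mul (left_ne_zero_of_mul hne) (right_ne_zero_of_mul hne)]
  omega

theorem natDegree_le_of_natDegree_X_mul_sq_add_sq_le {R : Type*} [CommRing R] [IsDomain R]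
    {f q : R[X]} {m : ℕ} (h : (X * f ^ 2 + q ^ 2).natDegree ≤ 2 * m + 1) :
    f.natDegree ≤ m ∧ q.natDegree ≤ m := by
  rcases eq_or_ne f 0 with rfl | hf
  · rw [zero_pow two_ne_zero, mul_zero, zero_add, natDegree_pow] at h
    exact ⟨by simp, by omega⟩
  have hXf : (X * f ^ 2).natDegree = 2 * f.natDegree + 1 := by
    rw [natDegree_X_mul (pow_ne_zero _ hf), natDegree_pow]
  have hq : (q ^ 2).natDegree = 2 * q.natDegree := natDegree_pow q 2
  rcases lt_or_gt_of_ne (show (q ^ 2).natDegree ≠ (X * f ^ 2).natDegree by omega) with hlt | hlt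
  · rw [natDegree_add_eq_left_of_natDegree_lt hlt] at h
    omega
  · rw [natDegree_add_eq_right_of_natDegree_lt hlt] at h
    omega

end Polynomial

/-- Markov–Lukács, odd case: a polynomial of degree ≤ 2m+1 that is
nonnegative on [0,∞) can be written as A·f(A)² + q(A)² with
deg f ≤ m and deg q ≤ m. -/
theorem stmt_2 (m : ℕ) (p : Polynomial ℝ)
    (hdeg : p.natDegree ≤ 2 * m + 1)
    (hpos : ∀ A : ℝ, 0 ≤ A → 0 ≤ p.eval A) :
    ∃ f q : Polynomial ℝ, f.natDegree ≤ m ∧ q.natDegree ≤ m ∧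
      p = Polynomial.X * f ^ 2 + q ^ 2 := by
  obtain ⟨f, q, rfl⟩ := isXMulSqAddSq_of_forall_nonneg hpos
  obtain ⟨hf, hq⟩ := natDegree_le_of_natDegree_X_mul_sq_add_sq_le hdeg
  exact ⟨f, q, hf, hq, rfl⟩
end

section
/- Every polynomial p(A) = Σ_{j=0}^{2m} η_j A^j of even degree at most 2m that is nonnegative for all A ∈ [0,∞) can be written as p(A) = f(A)² + A·q(A)² where f is a real polynomial of degree at most m and q is a real polynomial of degree at most m−1. -/
open Polynomial

/-!
The polynomials `f ^ 2 + X * q ^ 2` form a multiplicative monoid, by Brahmagupta's identity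
`(a² + X b²)(c² + X d²) = (ac - X bd)² + X (ad + bc)²`. So it suffices to split off from a
polynomial `p ≥ 0` on `[0, ∞)` a factor of positive degree of this shape and recurse on the
cofactor, which is again `≥ 0` on `[0, ∞)`. The factor is `X - r = (√-r)² + X` for a root
`r ≤ 0`; `(X - r)²` for a root `r > 0`, which is a double root since `p` has a local minimum
there; and `X² - 2 Re z X + |z|² = (X - |z|)² + X (√(2|z| - 2 Re z))²` for a non-real root
`z`.
The degree bounds come for free: `f ^ 2` and `X * q ^ 2` have degrees of different parity, so no
cancellation occurs in their sum.
-/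

def sqAddMulSq {R : Type*} [CommRing R] (t : R) : Submonoid R where
  carrier := {p | ∃ f q, p = f ^ 2 + t * q ^ 2}
  one_mem' := ⟨1, 0, by ring⟩
  mul_mem' := by
    rintro _ _ ⟨a, b, rfl⟩ ⟨c, d, rfl⟩
    exact ⟨a * c - t * b * d, a * d + b * c, by ring⟩

theorem sq_mem_sqAddMulSq {R : Type*} [CommRing R] (t f : R) : f ^ 2 ∈ sqAddMulSq t :=
  ⟨f, 0, by ring⟩

namespace Polynomial

theorem natDegree_sq_add_X_mul_sq {R : Type*} [CommRing R] [NoZeroDivisors R] (f : R[X])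
    {q : R[X]} (hq : q ≠ 0) :
    (f ^ 2 + X * q ^ 2).natDegree = max (2 * f.natDegree) (2 * q.natDegree + 1) := by
  have : Nontrivial R := Nontrivial.of_polynomial_ne hq
  have hf : (f ^ 2).natDegree = 2 * f.natDegree := natDegree_pow f 2
  have hXq : (X * q ^ 2).natDegree = 2 * q.natDegree + 1 := by
    rw [natDegree_X_mul (pow_ne_zero 2 hq), natDegree_pow]
  rcases lt_or_gt_of_ne (show 2 * f.natDegree ≠ 2 * q.natDegree + 1 by omega) with h | h
  · rw [natDegree_add_eq_right_of_natDegree_lt (by omega), hXq]; omega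
  · rw [natDegree_add_eq_left_of_natDegree_lt (by omega), hf]; omega

theorem eval_nonneg_of_mem_sqAddMulSq_X {R : Type*} [CommRing R] [LinearOrder R]
    [IsStrictOrderedRing R] {p : R[X]} (hp : p ∈ sqAddMulSq X) {x : R} (hx : 0 ≤ x) :
    0 ≤ p.eval x := by
  obtain ⟨f, q, rfl⟩ := hp
  simp only [eval_add, eval_mul, eval_pow, eval_X]
  positivity

theorem X_sub_C_mem_sqAddMulSq_X {r : ℝ} (hr : r ≤ 0) : X - C r ∈ sqAddMulSq X :=
  ⟨C √(-r), 1, by rw [← C_pow, Real.sq_sqrt (neg_nonneg.2 hr), C_neg]; ring⟩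

theorem quadratic_mem_sqAddMulSq_X (z : ℂ) :
    X ^ 2 - C (2 * z.re) * X + C (‖z‖ ^ 2) ∈ sqAddMulSq X := by
  have hre : z.re ≤ ‖z‖ := (le_abs_self _).trans (Complex.abs_re_le_norm z)
  refine ⟨X - C ‖z‖, C √(2 * ‖z‖ - 2 * z.re), ?_⟩
  rw [← C_pow, Real.sq_sqrt (by linarith)]
  simp only [map_sub, map_mul, map_pow, map_ofNat]
  ring

theorem eval_nonneg_of_eval_mul_nonneg {d g : ℝ[X]} (hd0 : d ≠ 0)
    (hd : ∀ x, 0 ≤ x → 0 ≤ d.eval x)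
    (hdg : ∀ x, 0 ≤ x → 0 ≤ (d * g).eval x) {x : ℝ} (hx : 0 ≤ x) : 0 ≤ g.eval x := by
  by_contra! hgx
  -- `g < 0` on a nonempty open subset of `(0, ∞)`, which meets the dense complement of the
  -- finitely many roots of `d`.
  have hneg : ({y | g.eval y < 0} ∩ Set.Ioi 0).Nonempty :=
    mem_closure_iff.1 (by rwa [closure_Ioi]) _ (isOpen_lt g.continuous continuous_const) hgx
  obtain ⟨y, ⟨hgy, hy⟩, hdy⟩ :=
    ((d.rootSet_finite ℝ).countable.dense_compl ℝ).inter_open_nonempty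
      _ ((isOpen_lt g.continuous continuous_const).inter isOpen_Ioi) hneg
  have hdy : 0 < d.eval y := (hd y hy.le).lt_of_ne' fun h => hdy (by simp [mem_rootSet, hd0, h])
  have hdgy := hdg y hy.le
  rw [eval_mul] at hdgy
  exact hdgy.not_gt (mul_neg_of_pos_of_neg hdy hgy)

theorem sq_X_sub_C_dvd_of_nonneg {p : ℝ[X]} (hp : ∀ x, 0 ≤ x → 0 ≤ p.eval x) (hp0 : p ≠ 0)
    {r : ℝ} (hr : 0 < r) (hroot : p.IsRoot r) : (X - C r) ^ 2 ∣ p := by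
  have hmin : IsLocalMin (fun x => p.eval x) r := by
    filter_upwards [Ici_mem_nhds hr] with x hx
    rw [hroot.eq_zero]
    exact hp x hx
  have hderiv : p.derivative.IsRoot r := by
    rw [IsRoot, ← Polynomial.deriv]
    exact hmin.deriv_eq_zero
  exact (le_rootMultiplicity_iff hp0).1
    ((one_lt_rootMultiplicity_iff_isRoot hp0).2 ⟨hroot, hderiv⟩)

theorem exists_dvd_mem_sqAddMulSq_X {p : ℝ[X]} (hp : ∀ x, 0 ≤ x → 0 ≤ p.eval x)
    (hdeg : 0 < p.natDegree) : ∃ d ∈ sqAddMulSq X, 0 < d.natDegree ∧ d ∣ p := by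
  have hp0 : p ≠ 0 := ne_zero_of_natDegree_gt hdeg
  by_cases hroot : ∃ r, p.IsRoot r
  · obtain ⟨r, hr⟩ := hroot
    rcases le_or_gt r 0 with hr0 | hr0
    · exact ⟨X - C r, X_sub_C_mem_sqAddMulSq_X hr0, by simp, dvd_iff_isRoot.2 hr⟩
    · exact ⟨(X - C r) ^ 2, sq_mem_sqAddMulSq _ _, by simp,
        sq_X_sub_C_dvd_of_nonneg hp hp0 hr0 hr⟩
  · obtain ⟨z, hz⟩ :=
      IsAlgClosed.exists_aeval_eq_zero ℂ p (natDegree_pos_iff_degree_pos.1 hdeg).ne'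
    have him : z.im ≠ 0 := by
      intro him
      have hzre : (z.re : ℂ) = z := Complex.ext rfl (by simp [him])
      rw [← hzre, ← Complex.coe_algebraMap, aeval_algebraMap_apply, map_eq_zero,
        coe_aeval_eq_eval] at hz
      exact hroot ⟨z.re, hz⟩
    have hQ : (X ^ 2 - C (2 * z.re) * X + C (‖z‖ ^ 2) : ℝ[X]).natDegree = 2 := by
      compute_degree!
    exact ⟨_, quadratic_mem_sqAddMulSq_X z, by rw [hQ]; norm_num,
      p.quadratic_dvd_of_aeval_eq_zero_im_ne_zero hz him⟩

theorem mem_sqAddMulSq_X_of_nonneg {p : ℝ[X]} (hp : ∀ x, 0 ≤ x → 0 ≤ p.eval x) :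
    p ∈ sqAddMulSq X := by
  induction hn : p.natDegree using Nat.strong_induction_on generalizing p with
  | _ n ih =>
  rcases Nat.eq_zero_or_pos n with rfl | hn0
  · have hc : 0 ≤ p.coeff 0 := by simpa [coeff_zero_eq_eval_zero] using hp 0 le_rfl
    rw [eq_C_of_natDegree_eq_zero hn, ← Real.sq_sqrt hc, C_pow]
    exact sq_mem_sqAddMulSq _ _
  · obtain ⟨d, hd, hd0, g, rfl⟩ := exists_dvd_mem_sqAddMulSq_X hp (hn ▸ hn0)
    have hdne : d ≠ 0 := ne_zero_of_natDegree_gt hd0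
    have hgne : g ≠ 0 := by rintro rfl; simp at hn; omega
    have hg : ∀ x, 0 ≤ x → 0 ≤ g.eval x := fun x hx =>
      eval_nonneg_of_eval_mul_nonneg hdne
        (fun y hy => eval_nonneg_of_mem_sqAddMulSq_X hd hy) hp hx
    have hgn : g.natDegree < n := by rw [← hn, natDegree_mul hdne hgne]; omega
    exact Submonoid.mul_mem _ hd (ih _ hgn hg rfl)

end Polynomial

/-- Markov–Lukács, even case: a polynomial of degree ≤ 2m that is
nonnegative on [0,∞) can be written as f(A)² + A·q(A)² with
deg f ≤ m and deg q ≤ m−1. -/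
theorem stmt_3 (m : ℕ) (p : Polynomial ℝ)
    (hdeg : p.natDegree ≤ 2 * m)
    (hpos : ∀ A : ℝ, 0 ≤ A → 0 ≤ p.eval A) :
    ∃ f q : Polynomial ℝ, f.natDegree ≤ m ∧ q.natDegree ≤ m - 1 ∧
      p = f ^ 2 + Polynomial.X * q ^ 2 := by
  obtain ⟨f, q, rfl⟩ := mem_sqAddMulSq_X_of_nonneg hpos
  rcases eq_or_ne q 0 with rfl | hq
  · refine ⟨f, 0, ?_, by simp, rfl⟩
    rw [zero_pow two_ne_zero, mul_zero, add_zero, natDegree_pow] at hdeg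
    omega
  · rw [natDegree_sq_add_X_mul_sq f hq] at hdeg
    exact ⟨f, q, by omega, by omega, rfl⟩
end

section
/- Let c = (c_0, ..., c_{2k+1}) be a vector of real numbers such that the Hankel matrix H_k(c) = (c_{i+j})_{0≤i,j≤k} is positive semidefinite, the shifted Hankel matrix B_k(c) = (c_{i+j+1})_{0≤i,j≤k} is positive semidefinite, and the vector (c_{k+1}, ..., c_{2k+1}) lies in the range of H_k(c). Then there exists a finite positive Borel measure μ on [0,∞) with ∫ A^j dμ = c_j for all j = 0, ..., 2k+1. Conversely, if such a measure exists, all three conditions hold. -/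
/-!
Sufficiency: the Hankel form `⟨x, y⟩ = xᵀ H y` is an inner product on `ℝ^{k+1} ⧸ ker H`. The
matrix `S` with columns `e₁, …, e_k, u` (multiplication by the variable on polynomials of degree
`≤ k`, with `A^{k+1}` rewritten through `H u = (c_{k+1}, …, c_{2k+1})`) satisfies `H S = B`, so it
induces a positive operator on that quotient. Its spectral measure at the class of `e₀` is
supported on `[0, ∞)` and has moments `⟨S^j e₀, e₀⟩ = c_j` for `j ≤ 2k + 1`.

Necessity: `xᵀ H x = ∫ p_x²` and `xᵀ B x = ∫ A p_x²` with `p_x(A) = ∑ xᵢ Aⁱ`. If `H w = 0` then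
`p_w = 0` almost everywhere, so `w ⬝ (c_{k+1}, …, c_{2k+1}) = ∫ A^{k+1} p_w = 0`; hence that
vector lies in `(ker H)ᗮ = range H`.
-/

open MeasureTheory Matrix
open scoped RealInnerProductSpace

theorem exists_measure_moments_eq_sum {ι : Type*} [Fintype ι] (w a : ι → ℝ)
    (hw : ∀ i, 0 ≤ w i) (ha : ∀ i, 0 ≤ a i) :
    ∃ μ : Measure ℝ, IsFiniteMeasure μ ∧ μ (Set.Iio 0) = 0 ∧
      ∀ j : ℕ, Integrable (fun A : ℝ => A ^ j) μ ∧ ∫ A, A ^ j ∂μ = ∑ i, w i * a i ^ j := by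
  refine ⟨∑ i, ENNReal.ofReal (w i) • Measure.dirac (a i), ⟨?_⟩, ?_, fun j => ?_⟩
  · simp [ENNReal.sum_lt_top]
  · simp [fun i => not_lt.2 (ha i)]
  · have hint : ∀ i, Integrable (fun A : ℝ => A ^ j) (ENNReal.ofReal (w i) • Measure.dirac (a i)) :=
      fun i => (integrable_dirac enorm_lt_top).smul_measure ENNReal.ofReal_ne_top
    refine ⟨integrable_finsetSum_measure.2 fun i _ => hint i, ?_⟩
    simp [integral_finsetSum_measure fun i _ => hint i, hw]

section Spectral

variable {E : Type*} [NormedAddCommGroup E] [InnerProductSpace ℝ E] [FiniteDimensional ℝ E]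

theorem LinearMap.IsPositive.exists_measure_moments_eq_inner {T : E →ₗ[ℝ] E}
    (hT : T.IsPositive) (e : E) :
    ∃ μ : Measure ℝ, IsFiniteMeasure μ ∧ μ (Set.Iio 0) = 0 ∧
      ∀ j : ℕ, Integrable (fun A : ℝ => A ^ j) μ ∧ ∫ A, A ^ j ∂μ = ⟪(T ^ j) e, e⟫ := by
  set b := hT.isSymmetric.eigenvectorBasis rfl
  set ev := hT.isSymmetric.eigenvalues rfl
  have hpow (j : ℕ) : ⟪(T ^ j) e, e⟫ = ∑ i, ⟪b i, e⟫ ^ 2 * ev i ^ j := by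
    rw [← b.sum_inner_mul_inner]
    refine Finset.sum_congr rfl fun i _ => ?_
    rw [hT.isSymmetric.pow j, ((hT.isSymmetric.hasEigenvector_eigenvectorBasis rfl i).pow_apply j),
      inner_smul_right, real_inner_comm e]
    simp only [RCLike.ofReal_real_eq_id, id_eq]
    ring
  obtain ⟨μ, hfin, hμ, hmom⟩ := exists_measure_moments_eq_sum _ _
    (fun i => sq_nonneg ⟪b i, e⟫) (hT.nonneg_eigenvalues rfl)
  exact ⟨μ, hfin, hμ, fun j => ⟨(hmom j).1, (hmom j).2.trans (hpow j).symm⟩⟩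

end Spectral

theorem LinearMap.IsAdjointPair.pow {R M : Type*} [CommSemiring R] [AddCommMonoid M] [Module R M]
    {B : LinearMap.BilinForm R M} {f : Module.End R M} (h : B.IsAdjointPair B f f) (n : ℕ) :
    B.IsAdjointPair B ⇑(f ^ n) ⇑(f ^ n) := by
  induction n with
  | zero => exact LinearMap.isAdjointPair_one
  | succ n ih => simpa only [← pow_succ, ← pow_succ'] using ih.mul h

theorem Matrix.PosSemidef.isPosSemidef_toBilin' {n : Type*} [Fintype n] [DecidableEq n]
    {A : Matrix n n ℝ} (hA : A.PosSemidef) :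
    (toBilin' A).IsPosSemidef := by
  have hA' : Aᵀ = A := (isHermitian_iff_isSymm.1 hA.isHermitian).eq
  refine ⟨⟨fun x y => ?_⟩, ⟨fun x => ?_⟩⟩
  · rw [toBilin'_apply', toBilin'_apply', dotProduct_mulVec, ← hA', vecMul_transpose,
      dotProduct_comm, hA']
  · simpa [toBilin'_apply'] using hA.dotProduct_mulVec_nonneg x

theorem Matrix.IsSymm.exists_mulVec_eq_of_forall_dotProduct_eq_zero {n : Type*} [Fintype n]
    [DecidableEq n] {H : Matrix n n ℝ} (hH : H.IsSymm) {v : n → ℝ}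
    (hv : ∀ w, H *ᵥ w = 0 → w ⬝ᵥ v = 0) : ∃ u, H *ᵥ u = v := by
  have hT : (toEuclideanLin H).IsSymmetric :=
    isSymmetric_toEuclideanLin_iff.2 (isHermitian_iff_isSymm.2 hH)
  have hv' : WithLp.toLp 2 v ∈ LinearMap.range (toEuclideanLin H) := by
    rw [← Submodule.orthogonal_orthogonal (LinearMap.range _), hT.orthogonal_range]
    intro w hw
    rw [LinearMap.mem_ker, toLpLin_apply, WithLp.toLp_eq_zero] at hw
    simpa [EuclideanSpace.inner_eq_star_dotProduct, dotProduct_comm] using hv _ hw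
  obtain ⟨u, hu⟩ := hv'
  exact ⟨WithLp.ofLp u, by simpa [toLpLin_apply] using hu⟩

namespace LinearMap.BilinForm

variable {V : Type*} [AddCommGroup V] [Module ℝ V] {φ : LinearMap.BilinForm ℝ V}

theorem IsPosSemidef.apply_eq_zero_of_apply_self_eq_zero (hφ : φ.IsPosSemidef) {x : V}
    (hx : φ x x = 0) (y : V) : φ x y = 0 := by
  have := φ.apply_sq_le_of_symm hφ.isNonneg.nonneg (isSymm_iff.1 hφ.isSymm) x y
  rw [hx, zero_mul] at this
  exact pow_eq_zero_iff two_ne_zero |>.1 (le_antisymm this (sq_nonneg _))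

abbrev IsPosSemidef.innerProductCore (hφ : φ.IsPosSemidef) :
    InnerProductSpace.Core ℝ (V ⧸ LinearMap.ker φ) where
  inner p q := hφ.isSymm.isRefl.liftQ₂ φ _ le_rfl p q
  conj_inner_symm p q := by
    induction p using Submodule.Quotient.induction_on
    induction q using Submodule.Quotient.induction_on
    exact hφ.isSymm.eq _ _
  re_inner_nonneg p := by
    induction p using Submodule.Quotient.induction_on
    exact hφ.isNonneg.nonneg _
  add_left p q r := map_add₂ _ p q r
  smul_left p q r := map_smul₂ _ r p q
  definite p hp := by
    induction p using Submodule.Quotient.induction_on with | _ x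
    exact (Submodule.Quotient.mk_eq_zero _).2 <| LinearMap.ext
      (hφ.apply_eq_zero_of_apply_self_eq_zero hp)

theorem IsPosSemidef.exists_measure_moments_eq [FiniteDimensional ℝ V]
    (hφ : φ.IsPosSemidef) {S : V →ₗ[ℝ] V} (hS : φ.IsAdjointPair φ S S)
    (hS_nonneg : ∀ x, 0 ≤ φ (S x) x) (e : V) :
    ∃ μ : Measure ℝ, IsFiniteMeasure μ ∧ μ (Set.Iio 0) = 0 ∧
      ∀ j : ℕ, Integrable (fun A : ℝ => A ^ j) μ ∧ ∫ A, A ^ j ∂μ = φ ((S ^ j) e) e := by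
  let core := hφ.innerProductCore
  let := core.toNormedAddCommGroup
  let := InnerProductSpace.ofCore core.toCore
  have hSker : LinearMap.ker φ ≤ (LinearMap.ker φ).comap S := fun x hx =>
    LinearMap.ext fun y => (hS x y).trans (LinearMap.congr_fun hx (S y))
  let M := (LinearMap.ker φ).mapQ _ S hSker
  have hM : M.IsPositive := by
    refine ⟨fun p q => ?_, fun p => ?_⟩
    · induction p using Submodule.Quotient.induction_on
      induction q using Submodule.Quotient.induction_on
      exact hS _ _
    · induction p using Submodule.Quotient.induction_on
      exact hS_nonneg _
  obtain ⟨μ, hfin, hμ, hmom⟩ := hM.exists_measure_moments_eq_inner (Submodule.Quotient.mk e)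
  refine ⟨μ, hfin, hμ, fun j => ⟨(hmom j).1, (hmom j).2.trans ?_⟩⟩
  rw [← Submodule.mapQ_pow]
  rfl

end LinearMap.BilinForm

section Hankel

variable {R : Type*}

def hankel (n : ℕ) (c : ℕ → R) : Matrix (Fin n) (Fin n) R :=
  Matrix.of fun i j => c (i + j)

@[simp]
theorem hankel_apply (n : ℕ) (c : ℕ → R) (i j : Fin n) : hankel n c i j = c (i + j) := rfl

theorem hankel_isSymm (n : ℕ) (c : ℕ → R) : (hankel n c).IsSymm :=
  IsSymm.ext fun i j => by simp [add_comm]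

variable [CommRing R] {k : ℕ}

-- The matrix with columns `e₁, …, e_k, u`.
def shiftMatrix (u : Fin (k + 1) → R) : Matrix (Fin (k + 1)) (Fin (k + 1)) R :=
  (Matrix.of (Fin.lastCases u fun m => Pi.single m.succ 1))ᵀ

theorem shiftMatrix_mulVec_single_castSucc (u : Fin (k + 1) → R) (m : Fin k) :
    shiftMatrix u *ᵥ Pi.single m.castSucc 1 = Pi.single m.succ 1 := by
  simp [shiftMatrix]

theorem shiftMatrix_mulVec_single_last (u : Fin (k + 1) → R) :
    shiftMatrix u *ᵥ Pi.single (Fin.last k) 1 = u := by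
  simp [shiftMatrix]

theorem shiftMatrix_pow_mulVec_single_zero (u : Fin (k + 1) → R) (a : Fin (k + 1)) :
    shiftMatrix u ^ (a : ℕ) *ᵥ Pi.single 0 1 = Pi.single a 1 := by
  induction a using Fin.induction with
  | zero => exact one_mulVec _
  | succ m ih =>
    rw [Fin.val_castSucc] at ih
    rw [Fin.val_succ, pow_succ', ← mulVec_mulVec, ih,
      shiftMatrix_mulVec_single_castSucc]

theorem shiftMatrix_pow_succ_mulVec_single_zero (u : Fin (k + 1) → R) :
    shiftMatrix u ^ (k + 1) *ᵥ Pi.single 0 1 = u := by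
  have h := shiftMatrix_pow_mulVec_single_zero u (Fin.last k)
  rw [Fin.val_last] at h
  rw [pow_succ', ← mulVec_mulVec, h, shiftMatrix_mulVec_single_last]

theorem hankel_mul_shiftMatrix {c : ℕ → R} {u : Fin (k + 1) → R}
    (hu : hankel (k + 1) c *ᵥ u = fun i : Fin (k + 1) => c (k + 1 + i)) :
    hankel (k + 1) c * shiftMatrix u = hankel (k + 1) fun j => c (j + 1) := by
  refine ext_of_mulVec_single fun j => ?_
  rw [← mulVec_mulVec]
  induction j using Fin.lastCases with
  | last =>
    rw [shiftMatrix_mulVec_single_last, hu]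
    ext i
    simp only [mulVec_single_one, col_apply, hankel_apply, Fin.val_last]
    ring_nf
  | cast m =>
    rw [shiftMatrix_mulVec_single_castSucc]
    ext i
    simp [add_assoc]

end Hankel

def HasMomentsUpTo (μ : Measure ℝ) (n : ℕ) (c : ℕ → ℝ) : Prop :=
  ∀ j ≤ n, Integrable (fun A : ℝ => A ^ j) μ ∧ ∫ A, A ^ j ∂μ = c j

theorem HasMomentsUpTo.mono {μ : Measure ℝ} {c : ℕ → ℝ} {m n : ℕ} (hμ : HasMomentsUpTo μ n c)
    (h : m ≤ n) : HasMomentsUpTo μ m c :=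
  fun j hj => hμ j (hj.trans h)

section Forward

variable {k : ℕ} {c : ℕ → ℝ} {u : Fin (k + 1) → ℝ}

theorem isAdjointPair_toBilin'_hankel_shiftMatrix
    (hu : hankel (k + 1) c *ᵥ u = fun i : Fin (k + 1) => c (k + 1 + i)) :
    (toBilin' (hankel (k + 1) c)).IsAdjointPair (toBilin' (hankel (k + 1) c))
      ⇑(toLin' (shiftMatrix u)) ⇑(toLin' (shiftMatrix u)) := by
  refine (isAdjointPair_toLinearMap₂' _ _ _ _).2 ?_
  rw [Matrix.IsAdjointPair, hankel_mul_shiftMatrix hu, ← (hankel_isSymm (k + 1) c).eq,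
    ← transpose_mul, hankel_mul_shiftMatrix hu, (hankel_isSymm _ _).eq]

theorem toBilin'_hankel_shiftMatrix_pow_single_zero
    (hu : hankel (k + 1) c *ᵥ u = fun i : Fin (k + 1) => c (k + 1 + i)) {j : ℕ}
    (hj : j ≤ 2 * k + 1) :
    toBilin' (hankel (k + 1) c) ((toLin' (shiftMatrix u) ^ j) (Pi.single 0 1))
      (Pi.single 0 1) = c j := by
  set φ := toBilin' (hankel (k + 1) c)
  set S := toLin' (shiftMatrix u)
  have hS : φ.IsAdjointPair φ ⇑S ⇑S := isAdjointPair_toBilin'_hankel_shiftMatrix hu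
  have hSpow (n : ℕ) : (S ^ n) (Pi.single 0 1) = shiftMatrix u ^ n *ᵥ Pi.single 0 1 := by
    rw [← toLin'_pow, toLin'_apply]
  have hpair (b : ℕ) (hb : b ≤ k + 1) (a : Fin (k + 1)) :
      φ ((S ^ b) (Pi.single 0 1)) (Pi.single a 1) = c (b + a) := by
    rw [hSpow]
    rcases hb.lt_or_eq with hb | rfl
    · rw [show b = ((⟨b, hb⟩ : Fin (k + 1)) : ℕ) from rfl, shiftMatrix_pow_mulVec_single_zero,
        toBilin'_single, hankel_apply]
    · rw [shiftMatrix_pow_succ_mulVec_single_zero, toBilin'_apply', mulVec_single_one,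
        dotProduct_comm, ← congrFun hu a]
      simp only [mulVec, dotProduct, col_apply, hankel_apply, add_comm]
  -- Write `j = a + b` with `a ≤ k`, `b ≤ k + 1`, and move `S ^ a` to the right.
  obtain ⟨a, b, hb, rfl⟩ : ∃ a : Fin (k + 1), ∃ b ≤ k + 1, j = a + b :=
    ⟨⟨j - min j (k + 1), by omega⟩, min j (k + 1), min_le_right _ _, by simp⟩
  rw [pow_add, Module.End.mul_apply, hS.pow, hSpow a,
    shiftMatrix_pow_mulVec_single_zero, hpair b hb, add_comm]

theorem exists_measure_of_posSemidef_hankel (hH : (hankel (k + 1) c).PosSemidef)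
    (hB : (hankel (k + 1) fun j => c (j + 1)).PosSemidef)
    (hu : hankel (k + 1) c *ᵥ u = fun i : Fin (k + 1) => c (k + 1 + i)) :
    ∃ μ : Measure ℝ, IsFiniteMeasure μ ∧ μ (Set.Iio 0) = 0 ∧ HasMomentsUpTo μ (2 * k + 1) c := by
  have hS := isAdjointPair_toBilin'_hankel_shiftMatrix hu
  have hS_nonneg (x : Fin (k + 1) → ℝ) :
      0 ≤ toBilin' (hankel (k + 1) c) (toLin' (shiftMatrix u) x) x := by
    rw [hS, toBilin'_apply', toLin'_apply, mulVec_mulVec, hankel_mul_shiftMatrix hu]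
    simpa using hB.dotProduct_mulVec_nonneg x
  obtain ⟨μ, hfin, hμ, hmom⟩ :=
    hH.isPosSemidef_toBilin'.exists_measure_moments_eq hS hS_nonneg (Pi.single 0 1)
  exact ⟨μ, hfin, hμ, fun j hj =>
    ⟨(hmom j).1, (hmom j).2.trans (toBilin'_hankel_shiftMatrix_pow_single_zero hu hj)⟩⟩

end Forward

section Backward

variable {μ : Measure ℝ} {c : ℕ → ℝ} {k : ℕ}

theorem pow_mul_sum_eq (m : ℕ) (x : Fin (k + 1) → ℝ) (A : ℝ) :
    A ^ m * ∑ i, x i * A ^ (i : ℕ) = ∑ i, x i * A ^ (m + i) := by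
  simp only [Finset.mul_sum, pow_add]
  exact Finset.sum_congr rfl fun i _ => by ring

theorem HasMomentsUpTo.integrable_pow_mul_sum {m : ℕ} (hμ : HasMomentsUpTo μ (m + k) c)
    (x : Fin (k + 1) → ℝ) : Integrable (fun A => A ^ m * ∑ i, x i * A ^ (i : ℕ)) μ := by
  simp only [pow_mul_sum_eq]
  exact integrable_finsetSum _ fun i _ => ((hμ _ (by omega)).1.const_mul _)

theorem HasMomentsUpTo.integral_pow_mul_sum {m : ℕ} (hμ : HasMomentsUpTo μ (m + k) c)
    (x : Fin (k + 1) → ℝ) : ∫ A, A ^ m * ∑ i, x i * A ^ (i : ℕ) ∂μ = ∑ i, x i * c (m + i) := by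
  simp only [pow_mul_sum_eq]
  rw [integral_finsetSum _ fun i _ => ((hμ _ (by omega)).1.const_mul _)]
  exact Finset.sum_congr rfl fun i _ => by rw [integral_const_mul, (hμ _ (by omega)).2]

theorem pow_mul_sum_mul_sum_eq (δ : ℕ) (x y : Fin (k + 1) → ℝ) (A : ℝ) :
    A ^ δ * ((∑ i, x i * A ^ (i : ℕ)) * ∑ i, y i * A ^ (i : ℕ)) =
      ∑ j : Fin (k + 1), y j * (A ^ (δ + j) * ∑ i, x i * A ^ (i : ℕ)) := by
  rw [mul_comm (∑ i, x i * _), Finset.sum_mul, Finset.mul_sum]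
  exact Finset.sum_congr rfl fun j _ => by rw [pow_add]; ring

theorem HasMomentsUpTo.integrable_pow_mul_sum_mul_sum {δ : ℕ}
    (hμ : HasMomentsUpTo μ (2 * k + δ) c) (x y : Fin (k + 1) → ℝ) :
    Integrable (fun A => A ^ δ * ((∑ i, x i * A ^ (i : ℕ)) * ∑ i, y i * A ^ (i : ℕ))) μ := by
  simp only [pow_mul_sum_mul_sum_eq]
  exact integrable_finsetSum _ fun j _ =>
    ((hμ.mono (by omega : δ + j + k ≤ _)).integrable_pow_mul_sum x).const_mul _

theorem HasMomentsUpTo.integral_pow_mul_sum_mul_sum {δ : ℕ} (hμ : HasMomentsUpTo μ (2 * k + δ) c)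
    (x y : Fin (k + 1) → ℝ) :
    ∫ A, A ^ δ * ((∑ i, x i * A ^ (i : ℕ)) * ∑ i, y i * A ^ (i : ℕ)) ∂μ =
      x ⬝ᵥ hankel (k + 1) (fun j => c (j + δ)) *ᵥ y := by
  have hμ' (j : Fin (k + 1)) : HasMomentsUpTo μ (δ + j + k) c := hμ.mono (by omega)
  simp only [pow_mul_sum_mul_sum_eq]
  rw [integral_finsetSum _ fun j _ => ((hμ' j).integrable_pow_mul_sum x).const_mul _]
  calc ∑ j, ∫ A, y j * (A ^ (δ + j) * ∑ i, x i * A ^ (i : ℕ)) ∂μ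
      = ∑ j : Fin (k + 1), ∑ i, y j * (x i * c (δ + j + i)) :=
        Finset.sum_congr rfl fun j _ => by
          rw [integral_const_mul, (hμ' j).integral_pow_mul_sum x, Finset.mul_sum]
    _ = x ⬝ᵥ hankel (k + 1) (fun j => c (j + δ)) *ᵥ y := by
        simp only [dotProduct, mulVec, hankel_apply, Finset.mul_sum]
        rw [Finset.sum_comm]
        refine Finset.sum_congr rfl fun i _ => Finset.sum_congr rfl fun j _ => ?_
        rw [show δ + j + i = i + j + δ by omega]
        ring

theorem HasMomentsUpTo.posSemidef_hankel {δ : ℕ} (hμ : HasMomentsUpTo μ (2 * k + δ) c)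
    (hδ : ∀ᵐ A ∂μ, 0 ≤ A ^ δ) : (hankel (k + 1) fun j => c (j + δ)).PosSemidef := by
  refine .of_dotProduct_mulVec_nonneg (isHermitian_iff_isSymm.2 (hankel_isSymm _ _)) fun x => ?_
  rw [star_trivial, ← hμ.integral_pow_mul_sum_mul_sum]
  exact integral_nonneg_of_ae <| hδ.mono fun A hA => mul_nonneg hA (mul_self_nonneg _)

theorem HasMomentsUpTo.exists_hankel_mulVec_eq (hμ : HasMomentsUpTo μ (2 * k + 1) c) :
    ∃ u, hankel (k + 1) c *ᵥ u = fun i : Fin (k + 1) => c (k + 1 + i) := by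
  refine (hankel_isSymm _ _).exists_mulVec_eq_of_forall_dotProduct_eq_zero fun w hw => ?_
  have hμ₀ : HasMomentsUpTo μ (2 * k + 0) c := hμ.mono (by omega)
  have hsq : ∫ A, A ^ 0 * ((∑ i, w i * A ^ (i : ℕ)) * ∑ i, w i * A ^ (i : ℕ)) ∂μ = 0 := by
    rw [hμ₀.integral_pow_mul_sum_mul_sum]
    exact (congrArg (w ⬝ᵥ ·) hw).trans (dotProduct_zero w)
  have hzero : ∀ᵐ A ∂μ, ∑ i, w i * A ^ (i : ℕ) = 0 := by
    filter_upwards [(integral_eq_zero_iff_of_nonneg (fun A => by simpa using mul_self_nonneg _)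
      (hμ₀.integrable_pow_mul_sum_mul_sum w w)).1 hsq] with A hA
    simpa using hA
  have hμ₁ : HasMomentsUpTo μ ((k + 1) + k) c := hμ.mono (by omega)
  show ∑ i, w i * c (k + 1 + i) = 0
  rw [← hμ₁.integral_pow_mul_sum w]
  exact integral_eq_zero_of_ae <| hzero.mono fun A hA => by simp [hA]

end Backward

/-- Truncated Stieltjes moment problem, odd case (Curto–Fialkow):
(c_0,…,c_{2k+1}) is a Stieltjes moment sequence iff the Hankel matrix
H_k is PSD, the shifted Hankel matrix B_k is PSD, and
(c_{k+1},…,c_{2k+1}) lies in the range of H_k. -/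
theorem stmt_5 (k : ℕ) (c : ℕ → ℝ) :
    ((Matrix.of fun i j : Fin (k + 1) => c ((i : ℕ) + (j : ℕ))).PosSemidef ∧
     (Matrix.of fun i j : Fin (k + 1) => c ((i : ℕ) + (j : ℕ) + 1)).PosSemidef ∧
     (∃ u : Fin (k + 1) → ℝ,
        (Matrix.of fun i j : Fin (k + 1) => c ((i : ℕ) + (j : ℕ))).mulVec u =
          fun i : Fin (k + 1) => c (k + 1 + (i : ℕ))))
    ↔
    (∃ μ : Measure ℝ, IsFiniteMeasure μ ∧ μ (Set.Iio 0) = 0 ∧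
       ∀ j ≤ 2 * k + 1,
         Integrable (fun A : ℝ => A ^ j) μ ∧ (∫ A, A ^ j ∂μ) = c j) := by
  constructor
  · rintro ⟨hH, hB, u, hu⟩
    exact exists_measure_of_posSemidef_hankel hH hB hu
  · rintro ⟨μ, -, hμ₀, hμ⟩
    have hμ : HasMomentsUpTo μ (2 * k + 1) c := hμ
    have hnonneg : ∀ᵐ A ∂μ, 0 ≤ A ^ 1 :=
      (measure_eq_zero_iff_ae_notMem.1 hμ₀).mono fun A hA => by simpa using hA
    exact ⟨(hμ.mono (by omega : 2 * k + 0 ≤ _)).posSemidef_hankel (by simp),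
      hμ.posSemidef_hankel hnonneg, hμ.exists_hankel_mulVec_eq⟩
end

section
/- Let r_0, r_1, r_2, r_3 be the moments up to order 3 of a finite positive Borel measure μ on [0,∞) that is not the zero measure. If the 2×2 Hankel matrix [[r_0, r_1],[r_1, r_2]] is singular (r_0 r_2 = r_1²) and positive semidefinite, then μ is a point mass: there exist a ≥ 0 and m > 0 such that ∫ f dμ = m·f(a) for all continuous f, and moreover r_j = m·a^j for j = 0,1,2,3. -/
/-!
Put `a = r₁ / r₀`. Expanding the square, `∫ (x - a)² dμ = r₂ - r₁² / r₀`, which vanishes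
because the Hankel determinant does. So `μ` is concentrated at `a`, every integral against `μ`
is `μ(ℝ) · f(a)`, and `a ≥ 0` because `μ` lives on `[0, ∞)`.
-/

open MeasureTheory

theorem integral_eq_measureReal_univ_smul_of_ae_eq {α E : Type*} [MeasurableSpace α]
    [NormedAddCommGroup E] [NormedSpace ℝ E] [CompleteSpace E] {μ : Measure α} {a : α}
    (hae : ∀ᵐ x ∂μ, x = a) (f : α → E) :
    ∫ x, f x ∂μ = μ.real Set.univ • f a := by
  rw [← integral_const]
  exact integral_congr_ae (by filter_upwards [hae] with x hx using congrArg f hx)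

section MomentsOnReal

variable {μ : Measure ℝ}

theorem ae_nonneg_of_measure_Iio_zero (hsupp : μ (Set.Iio 0) = 0) : ∀ᵐ x ∂μ, 0 ≤ x :=
  ae_iff.mpr (by simp only [not_le]; exact hsupp)

theorem sub_sq_eq_fun (a : ℝ) :
    (fun x : ℝ => (x - a) ^ 2) = fun x => x ^ 2 - 2 * a * x + a ^ 2 := by
  funext x; ring

theorem integrable_sub_sq [IsFiniteMeasure μ] (h₁ : Integrable (fun x : ℝ => x) μ)
    (h₂ : Integrable (fun x : ℝ => x ^ 2) μ) (a : ℝ) :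
    Integrable (fun x : ℝ => (x - a) ^ 2) μ := by
  rw [sub_sq_eq_fun]
  exact (h₂.sub (h₁.const_mul _)).add (integrable_const _)

theorem integral_sub_sq [IsFiniteMeasure μ] (h₁ : Integrable (fun x : ℝ => x) μ)
    (h₂ : Integrable (fun x : ℝ => x ^ 2) μ) (a : ℝ) :
    ∫ x, (x - a) ^ 2 ∂μ = ∫ x, x ^ 2 ∂μ - 2 * a * ∫ x, x ∂μ + a ^ 2 * μ.real Set.univ := by
  have h₁' : Integrable (fun x : ℝ => 2 * a * x) μ := h₁.const_mul _
  rw [sub_sq_eq_fun, integral_add (f := fun x => x ^ 2 - 2 * a * x) (h₂.sub h₁')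
    (integrable_const _), integral_sub h₂ h₁', integral_const_mul, integral_const, smul_eq_mul]
  ring

theorem ae_eq_of_integral_sub_sq_eq_zero {a : ℝ}
    (hint : Integrable (fun x : ℝ => (x - a) ^ 2) μ) (hzero : ∫ x, (x - a) ^ 2 ∂μ = 0) :
    ∀ᵐ x ∂μ, x = a := by
  filter_upwards [(integral_eq_zero_iff_of_nonneg (fun x => sq_nonneg (x - a)) hint).mp hzero]
    with x hx
  exact sub_eq_zero.mp (pow_eq_zero_iff two_ne_zero |>.mp hx)

/-- The equality case of `(∫ x dμ)² ≤ μ(ℝ) · ∫ x² dμ`. -/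
theorem ae_eq_mean_of_sq_integral_eq [IsFiniteMeasure μ] (hμ : μ ≠ 0)
    (h₁ : Integrable (fun x : ℝ => x) μ) (h₂ : Integrable (fun x : ℝ => x ^ 2) μ)
    (hsing : μ.real Set.univ * ∫ x, x ^ 2 ∂μ = (∫ x, x ∂μ) ^ 2) :
    ∀ᵐ x ∂μ, x = (∫ x, x ∂μ) / μ.real Set.univ := by
  have : NeZero μ := ⟨hμ⟩
  have hm : μ.real Set.univ ≠ 0 := measureReal_univ_pos.ne'
  refine ae_eq_of_integral_sub_sq_eq_zero (integrable_sub_sq h₁ h₂ _) ?_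
  rw [integral_sub_sq h₁ h₂]
  field_simp
  linear_combination hsing

end MomentsOnReal

theorem stmt_8_general (μ : Measure ℝ) [IsFiniteMeasure μ] (hμ : μ ≠ 0)
    (hsupp : μ (Set.Iio 0) = 0)
    (hint : ∀ j ≤ 3, Integrable (fun A : ℝ => A ^ j) μ)
    (r : ℕ → ℝ) (hr : ∀ j ≤ 3, r j = ∫ A, A ^ j ∂μ)
    (hsing : r 0 * r 2 = r 1 ^ 2) :
    ∃ a : ℝ, 0 ≤ a ∧ ∃ m : ℝ, 0 < m ∧
      (∀ f : ℝ → ℝ, Continuous f → (∫ x, f x ∂μ) = m * f a) ∧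
      (∀ j ≤ 3, r j = m * a ^ j) := by
  have : NeZero μ := ⟨hμ⟩
  have hr₀ : r 0 = μ.real Set.univ := by simp [hr 0 (by norm_num)]
  have hr₁ : r 1 = ∫ x, x ∂μ := by simp [hr 1 (by norm_num)]
  have h₁ : Integrable (fun x : ℝ => x) μ := by simpa using hint 1 (by norm_num)
  have hae : ∀ᵐ x ∂μ, x = r 1 / r 0 := by
    rw [hr₀, hr₁]
    refine ae_eq_mean_of_sq_integral_eq hμ h₁ (hint 2 (by norm_num)) ?_
    rwa [← hr₀, ← hr₁, ← hr 2 (by norm_num)]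
  have hpoint := integral_eq_measureReal_univ_smul_of_ae_eq (E := ℝ) hae
  obtain ⟨x, hx, hx_nonneg⟩ := (hae.and (ae_nonneg_of_measure_Iio_zero hsupp)).exists
  refine ⟨r 1 / r 0, hx ▸ hx_nonneg, μ.real Set.univ, measureReal_univ_pos,
    fun f _ => hpoint f, fun j hj => ?_⟩
  rw [hr j hj, hpoint, smul_eq_mul]

/-- If the 2×2 Hankel matrix of moments of a nonzero finite positive
measure on [0,∞) is singular (and PSD), the measure is a point mass
m·δ_a with a ≥ 0, m > 0, and moments r_j = m·a^j for j = 0,…,3. -/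
theorem stmt_8 (μ : Measure ℝ) [IsFiniteMeasure μ] (hμ : μ ≠ 0)
    (hsupp : μ (Set.Iio 0) = 0)
    (hint : ∀ j ≤ 3, Integrable (fun A : ℝ => A ^ j) μ)
    (r : ℕ → ℝ) (hr : ∀ j ≤ 3, r j = ∫ A, A ^ j ∂μ)
    (hsing : r 0 * r 2 = r 1 ^ 2)
    (hpsd : (Matrix.of ![![r 0, r 1], ![r 1, r 2]]).PosSemidef) :
    ∃ a : ℝ, 0 ≤ a ∧ ∃ m : ℝ, 0 < m ∧
      (∀ f : ℝ → ℝ, Continuous f → (∫ x, f x ∂μ) = m * f a) ∧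
      (∀ j ≤ 3, r j = m * a ^ j) :=
  stmt_8_general μ hμ hsupp hint r hr hsing
end
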